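/- arXiv:2208.04459 — 4 statements merged into one kernel-verified Lean document; each statement's English description precedes it below -/
import Mathlib

section
/- Let L be a positive real, P a positive integer, and |φ| < 1. Define η = (L/P + 1)² + L²/P² − 2(L/P)(L/P + 1)φ^P. Then η > 1. -/
/-- The variance amplification ratio of one echelon under the order-up-to policy with
stationary AR(1) demand exceeds 1. -/
theorem eta_gt_one (L : ℝ) (hL : 0 < L) (P : ℕ) (hP : 0 < P) (φ : ℝ) (hφ : |φ| < 1) :
    1 < (L / (P : ℝ) + 1) ^ 2 + L ^ 2 / (P : ℝ) ^ 2
        - 2 * (L / (P : ℝ)) * (L / (P : ℝ) + 1) * φ ^ P := by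
  have hPpos : (0:ℝ) < (P:ℝ) := by exact_mod_cast hP
  have hr : 0 < L / (P:ℝ) := div_pos hL hPpos
  have hφP : φ ^ P < 1 := by
    have := pow_lt_one₀ (abs_nonneg φ) hφ hP.ne'
    calc φ ^ P ≤ |φ ^ P| := le_abs_self _
    _ = |φ| ^ P := abs_pow φ P
    _ < 1 := this
  have h2 : L ^ 2 / (P:ℝ) ^ 2 = (L / (P:ℝ)) ^ 2 := by
    rw [div_pow]
  rw [h2]
  nlinarith [mul_pos hr (mul_pos (by linarith : (0:ℝ) < L/(P:ℝ)+1) (by linarith : (0:ℝ) < 1 - φ^P))]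
end

section
/- Fix L > 0 and a positive integer P. Define f : [1, ∞) → ℝ by f(α) = α·[(L/P + 1)² + L²/P² − 2(L/P)(L/P + 1)(1 − α^{-1})^{P/2}]. Then: (i) if P = 1, f is convex; (ii) if P = 2, f is affine (linear); (iii) if P ≥ 3, f is concave. -/
/-!
Write `f(α) = α (C - K u^p)` with `u = 1 - α⁻¹`, `p = P / 2` and `K = 2 (L/P)(L/P + 1) > 0`.
On `(1, ∞)` one computes `f''(α) = -K p (p - 1) u^(p - 2) / α³`, whose sign is that of
`-p (p - 1)`: positive for `p = 1/2`, negative for `p ≥ 3/2`. For `p = 1`, `f(α) = (C - K) α + K`.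
-/

open Set

lemma hasDerivAt_one_sub_inv {x : ℝ} (hx : x ≠ 0) :
    HasDerivAt (fun α : ℝ => 1 - α⁻¹) (x ^ 2)⁻¹ x := by
  simpa using (hasDerivAt_inv hx).const_sub 1

lemma one_sub_inv_pos {x : ℝ} (hx : 1 < x) : 0 < 1 - x⁻¹ :=
  sub_pos.2 (inv_lt_one_of_one_lt₀ hx)

section MulSubRpow

variable (p C K : ℝ)

lemma hasDerivAt_mul_sub_mul_one_sub_inv_rpow {x : ℝ} (hx : 1 < x) :
    HasDerivAt (fun α : ℝ => α * (C - K * (1 - α⁻¹) ^ p))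
      (C - K * ((1 - x⁻¹) ^ p + p * ((1 - x⁻¹) ^ (p - 1) * x⁻¹))) x := by
  have hx0 : x ≠ 0 := by positivity
  have hu := (hasDerivAt_one_sub_inv hx0).rpow_const (p := p) (Or.inl (one_sub_inv_pos hx).ne')
  refine ((hasDerivAt_id x).mul ((hu.const_mul K).const_sub C)).congr_deriv ?_
  simp only [id]
  field_simp
  ring

lemma hasDerivAt_deriv_mul_sub_mul_one_sub_inv_rpow {x : ℝ} (hx : 1 < x) :
    HasDerivAt (fun α : ℝ => C - K * ((1 - α⁻¹) ^ p + p * ((1 - α⁻¹) ^ (p - 1) * α⁻¹)))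
      (-(K * (p * (p - 1)) * (1 - x⁻¹) ^ (p - 2) * (x ^ 3)⁻¹)) x := by
  have hx0 : x ≠ 0 := by positivity
  have hu := hasDerivAt_one_sub_inv hx0
  have hu0 := (one_sub_inv_pos hx).ne'
  have hpow := hu.rpow_const (p := p) (Or.inl hu0)
  have hpowMulInv :=
    ((hu.rpow_const (p := p - 1) (Or.inl hu0)).mul (hasDerivAt_inv hx0)).const_mul p
  refine (((hpow.add hpowMulInv).const_mul K).const_sub C).congr_deriv ?_
  rw [show p - 1 - 1 = p - 2 by ring]
  field_simp
  ring

variable {p}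

theorem convexOn_mul_sub_mul_one_sub_inv_rpow (hp : 0 ≤ p) (hK : K * (p * (p - 1)) ≤ 0) :
    ConvexOn ℝ (Ici 1) (fun α : ℝ => α * (C - K * (1 - α⁻¹) ^ p)) := by
  have hcont : ContinuousOn (fun α : ℝ => (1 - α⁻¹) ^ p) (Ici 1) :=
    (continuousOn_const.sub (continuousOn_inv₀.mono fun x (hx : 1 ≤ x) =>
      (zero_lt_one.trans_le hx).ne')).rpow_const fun _ _ => Or.inr hp
  refine convexOn_of_hasDerivWithinAt2_nonneg (convex_Ici 1)
    (continuousOn_id.mul (continuousOn_const.sub (hcont.const_smul K)))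
    (fun x hx =>
      (hasDerivAt_mul_sub_mul_one_sub_inv_rpow p C K (interior_Ici.subset hx)).hasDerivWithinAt)
    (fun x hx =>
      (hasDerivAt_deriv_mul_sub_mul_one_sub_inv_rpow p C K (interior_Ici.subset hx)).hasDerivWithinAt)
    fun x hx => ?_
  replace hx : 1 < x := interior_Ici.subset hx
  have hu : 0 ≤ (1 - x⁻¹) ^ (p - 2) := Real.rpow_nonneg (one_sub_inv_pos hx).le _
  have hx3 : 0 ≤ (x ^ 3)⁻¹ := by positivity
  exact neg_nonneg.2 (mul_nonpos_of_nonpos_of_nonneg (mul_nonpos_of_nonpos_of_nonneg hK hu) hx3)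

theorem concaveOn_mul_sub_mul_one_sub_inv_rpow (hp : 0 ≤ p) (hK : 0 ≤ K * (p * (p - 1))) :
    ConcaveOn ℝ (Ici 1) (fun α : ℝ => α * (C - K * (1 - α⁻¹) ^ p)) := by
  rw [← neg_convexOn_iff]
  refine (convexOn_mul_sub_mul_one_sub_inv_rpow (-C) (-K) hp (by linarith)).congr fun α _ => ?_
  simp only [Pi.neg_apply]
  ring

end MulSubRpow

lemma mul_sub_mul_one_sub_inv (C K : ℝ) {α : ℝ} (hα : α ≠ 0) :
    α * (C - K * (1 - α⁻¹)) = (C - K) * α + K := by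
  field_simp
  ring

theorem f_convexity_cases_general (L : ℝ) (hL : 0 < L) (P : ℕ) :
    (P = 1 → ConvexOn ℝ (Set.Ici (1 : ℝ))
      (fun α : ℝ => α * ((L / (P : ℝ) + 1) ^ 2 + L ^ 2 / (P : ℝ) ^ 2
        - 2 * (L / (P : ℝ)) * (L / (P : ℝ) + 1) * (1 - α⁻¹) ^ ((P : ℝ) / 2))))
    ∧ (P = 2 → ∃ b d : ℝ, ∀ α ∈ Set.Ici (1 : ℝ),
        α * ((L / (P : ℝ) + 1) ^ 2 + L ^ 2 / (P : ℝ) ^ 2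
          - 2 * (L / (P : ℝ)) * (L / (P : ℝ) + 1) * (1 - α⁻¹) ^ ((P : ℝ) / 2)) = b * α + d)
    ∧ (3 ≤ P → ConcaveOn ℝ (Set.Ici (1 : ℝ))
      (fun α : ℝ => α * ((L / (P : ℝ) + 1) ^ 2 + L ^ 2 / (P : ℝ) ^ 2
        - 2 * (L / (P : ℝ)) * (L / (P : ℝ) + 1) * (1 - α⁻¹) ^ ((P : ℝ) / 2)))) := by
  have hK : 0 ≤ 2 * (L / (P : ℝ)) * (L / (P : ℝ) + 1) := by positivity
  refine ⟨?_, ?_, ?_⟩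
  · rintro rfl
    exact convexOn_mul_sub_mul_one_sub_inv_rpow _ _ (by norm_num)
      (mul_nonpos_of_nonneg_of_nonpos hK (by norm_num))
  · rintro rfl
    simp only [show ((2 : ℕ) : ℝ) / 2 = 1 by norm_num, Real.rpow_one]
    exact ⟨_, _, fun α (hα : 1 ≤ α) => mul_sub_mul_one_sub_inv _ _ (by positivity)⟩
  · intro hP3
    have hp : (3 : ℝ) / 2 ≤ P / 2 := by gcongr; exact_mod_cast hP3
    exact concaveOn_mul_sub_mul_one_sub_inv_rpow _ _ (by linarith)
      (mul_nonneg hK (by nlinarith))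

/-- Convexity/linearity/concavity of `f(α) = α·η(α)` on `[1, ∞)` depending on the
moving-average window `P`. -/
theorem f_convexity_cases (L : ℝ) (hL : 0 < L) (P : ℕ) (hP : 0 < P) :
    (P = 1 → ConvexOn ℝ (Set.Ici (1 : ℝ))
      (fun α : ℝ => α * ((L / (P : ℝ) + 1) ^ 2 + L ^ 2 / (P : ℝ) ^ 2
        - 2 * (L / (P : ℝ)) * (L / (P : ℝ) + 1) * (1 - α⁻¹) ^ ((P : ℝ) / 2))))
    ∧ (P = 2 → ∃ b d : ℝ, ∀ α ∈ Set.Ici (1 : ℝ),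
        α * ((L / (P : ℝ) + 1) ^ 2 + L ^ 2 / (P : ℝ) ^ 2
          - 2 * (L / (P : ℝ)) * (L / (P : ℝ) + 1) * (1 - α⁻¹) ^ ((P : ℝ) / 2)) = b * α + d)
    ∧ (3 ≤ P → ConcaveOn ℝ (Set.Ici (1 : ℝ))
      (fun α : ℝ => α * ((L / (P : ℝ) + 1) ^ 2 + L ^ 2 / (P : ℝ) ^ 2
        - 2 * (L / (P : ℝ)) * (L / (P : ℝ) + 1) * (1 - α⁻¹) ^ ((P : ℝ) / 2)))) :=
  f_convexity_cases_general L hL P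
end

section
/- Let g : [e₀, ∞) → ℝ be continuous and X a non-degenerate random variable supported on [e₀, ∞) with E[g(X)] = 0 and E[(X − h)·g(X)] = 0 for every real h. Then g has at least two distinct zeros h₁ ≠ h₂ in the support interval of X. Equivalently: if g has at most one zero, then either E[g(X)] ≠ 0 or there exists h₁ with E[(X − h₁) g(X)] ≠ 0. -/
/-!
If `g` vanished at most at one point `c` of `[e₀, ∞)`, the intermediate value theorem would give
`g` a constant sign on each side of `c`, so some affine `ℓ x = α + β (x - c)` makes `ℓ * g`
positive away from `c`. The two moment conditions say exactly that `E[ℓ(X) g(X)] = 0`, which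
forces `X = c` almost surely, contradicting the positive variance.
-/

open MeasureTheory Set

theorem IsPreconnected.pos_or_neg_of_ne_zero {α β : Type*} [TopologicalSpace α]
    [LinearOrder β] [TopologicalSpace β] [OrderClosedTopology β] [Zero β]
    {s : Set α} {g : α → β} (hs : IsPreconnected s) (hg : ContinuousOn g s)
    (hne : ∀ x ∈ s, g x ≠ 0) :
    (∀ x ∈ s, 0 < g x) ∨ (∀ x ∈ s, g x < 0) := by
  by_contra! h
  obtain ⟨⟨a, ha, hga⟩, b, hb, hgb⟩ := h
  obtain ⟨x, hx, hgx⟩ := hs.intermediate_value ha hb hg ⟨hga, hgb⟩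
  exact hne x hx hgx

/-- The multiplier is `±1` when `g` has the same sign on both sides of `c`, `±(x - c)` otherwise. -/
theorem exists_affine_mul_pos {s : Set ℝ} {g : ℝ → ℝ} {c : ℝ} (hs : s.OrdConnected)
    (hg : ContinuousOn g s) (hc : ∀ x ∈ s, x ≠ c → g x ≠ 0) :
    ∃ α β : ℝ, ∀ x ∈ s, x ≠ c → 0 < (α + β * (x - c)) * g x := by
  have hL := (hs.inter ordConnected_Iio).isPreconnected.pos_or_neg_of_ne_zero
    (hg.mono inter_subset_left) fun x hx => hc x hx.1 (ne_of_lt hx.2)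
  have hR := (hs.inter ordConnected_Ioi).isPreconnected.pos_or_neg_of_ne_zero
    (hg.mono inter_subset_left) fun x hx => hc x hx.1 (ne_of_gt hx.2)
  rcases hL with hL | hL <;> rcases hR with hR | hR <;>
    [refine ⟨1, 0, ?_⟩; refine ⟨0, -1, ?_⟩; refine ⟨0, 1, ?_⟩; refine ⟨-1, 0, ?_⟩] <;>
  · intro x hx hxc
    rcases hxc.lt_or_gt with hlt | hgt
    · have := hL x ⟨hx, hlt⟩
      nlinarith
    · have := hR x ⟨hx, hgt⟩
      nlinarith

theorem ae_eq_of_integral_comp_eq_zero {Ω : Type*} [MeasurableSpace Ω] {μ : Measure Ω}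
    {X : Ω → ℝ} {φ : ℝ → ℝ} {s : Set ℝ} {c : ℝ} (hXs : ∀ᵐ ω ∂μ, X ω ∈ s)
    (hφ : ∀ x ∈ s, x ≠ c → 0 < φ x) (hφc : c ∈ s → φ c = 0)
    (hint : Integrable (fun ω => φ (X ω)) μ) (h0 : ∫ ω, φ (X ω) ∂μ = 0) :
    ∀ᵐ ω ∂μ, X ω = c := by
  have hnonneg : 0 ≤ᵐ[μ] fun ω => φ (X ω) := by
    filter_upwards [hXs] with ω hω
    show 0 ≤ φ (X ω)
    rcases eq_or_ne (X ω) c with hXc | hXc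
    · rw [hXc, hφc (hXc ▸ hω)]
    · exact (hφ _ hω hXc).le
  filter_upwards [(integral_eq_zero_iff_of_nonneg_ae hnonneg hint).mp h0, hXs] with ω hφX hω
  by_contra hXc
  exact (hφ _ hω hXc).ne' hφX

theorem integral_sq_sub_sq_integral_of_ae_eq_const {Ω : Type*} [MeasurableSpace Ω]
    {μ : Measure Ω} [IsProbabilityMeasure μ] {X : Ω → ℝ} {c : ℝ} (h : ∀ᵐ ω ∂μ, X ω = c) :
    ∫ ω, X ω ^ 2 ∂μ - (∫ ω, X ω ∂μ) ^ 2 = 0 := by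
  rw [integral_congr_ae (h.mono fun ω hω => congrArg (· ^ 2) hω), integral_congr_ae h]
  simp

theorem residual_has_two_zeros_general {Ω : Type*} [MeasureSpace Ω]
    [IsProbabilityMeasure (volume : Measure Ω)]
    (X : Ω → ℝ) (g : ℝ → ℝ) (e₀ : ℝ)
    (hsupp : ∀ᵐ ω, e₀ ≤ X ω)
    (hg : ContinuousOn g (Set.Ici e₀))
    (hgX : Integrable (fun ω => g (X ω))) (hXgX : Integrable (fun ω => X ω * g (X ω)))
    (hvar : 0 < (∫ ω, (X ω) ^ 2) - (∫ ω, X ω) ^ 2)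
    (hmean : ∫ ω, g (X ω) = 0)
    (horth : ∀ h : ℝ, ∫ ω, (X ω - h) * g (X ω) = 0) :
    ∃ h₁ h₂ : ℝ, h₁ ∈ Set.Ici e₀ ∧ h₂ ∈ Set.Ici e₀ ∧ h₁ ≠ h₂ ∧ g h₁ = 0 ∧ g h₂ = 0 := by
  by_contra! hno
  obtain ⟨c, hc⟩ : ∃ c, ∀ x ∈ Ici e₀, g x = 0 ↔ x = c := by
    by_cases hz : ∃ c ∈ Ici e₀, g c = 0
    · obtain ⟨c, hce, hgc⟩ := hz
      refine ⟨c, fun x hx => ⟨fun hgx => ?_, fun hxc => hxc ▸ hgc⟩⟩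
      by_contra hxc
      exact hno x c hx hce hxc hgx hgc
    · push Not at hz
      refine ⟨e₀ - 1, fun x hx => iff_of_false (hz x hx) ?_⟩
      rintro rfl
      norm_num at hx
  obtain ⟨α, β, hpos⟩ :=
    exists_affine_mul_pos ordConnected_Ici hg fun x hx hxc => mt (hc x hx).1 hxc
  have hXcg : Integrable fun ω => (X ω - c) * g (X ω) :=
    (hXgX.sub (hgX.const_mul c)).congr (ae_of_all _ fun ω => by simp only [sub_mul]; rfl)
  have hint : Integrable fun ω => (α + β * (X ω - c)) * g (X ω) :=
    ((hgX.const_mul α).add (hXcg.const_mul β)).congr (ae_of_all _ fun ω => by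
      simp only [Pi.add_apply]; ring)
  have hzero : ∫ ω, (α + β * (X ω - c)) * g (X ω) = 0 := by
    calc ∫ ω, (α + β * (X ω - c)) * g (X ω)
        = ∫ ω, (α * g (X ω) + β * ((X ω - c) * g (X ω))) := by congr 1 with ω; ring
      _ = α * (∫ ω, g (X ω)) + β * ∫ ω, (X ω - c) * g (X ω) := by
        rw [integral_add (hgX.const_mul α) (hXcg.const_mul β), integral_const_mul,
          integral_const_mul]
      _ = 0 := by rw [hmean, horth c]; ring
  have hXc := ae_eq_of_integral_comp_eq_zero hsupp hpos
    (fun hce => by rw [(hc c hce).2 rfl, mul_zero]) hint hzero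
  exact hvar.ne' (integral_sq_sub_sq_integral_of_ae_eq_const hXc)

/-- If a continuous function `g` has zero mean against a non-degenerate random
variable `X` supported on `[e₀, ∞)` and `E[(X − h) g(X)] = 0` for every `h`, then `g`
has at least two distinct zeros in `[e₀, ∞)`. -/
theorem residual_has_two_zeros {Ω : Type*} [MeasureSpace Ω]
    [IsProbabilityMeasure (volume : Measure Ω)]
    (X : Ω → ℝ) (g : ℝ → ℝ) (e₀ : ℝ)
    (hsupp : ∀ᵐ ω, e₀ ≤ X ω)
    (hg : ContinuousOn g (Set.Ici e₀))
    (hX : Integrable X) (hX2 : Integrable (fun ω => (X ω) ^ 2))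
    (hgX : Integrable (fun ω => g (X ω))) (hXgX : Integrable (fun ω => X ω * g (X ω)))
    (hvar : 0 < (∫ ω, (X ω) ^ 2) - (∫ ω, X ω) ^ 2)
    (hmean : ∫ ω, g (X ω) = 0)
    (horth : ∀ h : ℝ, ∫ ω, (X ω - h) * g (X ω) = 0) :
    ∃ h₁ h₂ : ℝ, h₁ ∈ Set.Ici e₀ ∧ h₂ ∈ Set.Ici e₀ ∧ h₁ ≠ h₂ ∧ g h₁ = 0 ∧ g h₂ = 0 :=
  residual_has_two_zeros_general X g e₀ hsupp hg hgX hXgX hvar hmean horth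
end

section
/- Let {(A_i, B_i)}_{i=1}^∞ be an i.i.d. sequence of pairs of positive bounded random variables with B bounded away from 0, and suppose cov(A, B)/var(B) ≤ E[A]/E[B] with strict inequality. Then, writing Z_M = (Σ_{i=1}^M A_i)/(Σ_{i=1}^M B_i), the second-order term of the expansion of E[Z_M] in powers of 1/M is nonnegative: E[Z_M] = E[A]/E[B] + M^{-1}·E[B]^{-2}·( (E[A]/E[B])·var(B) − cov(A, B) ) + O(M^{-2}), and the coefficient (E[A]/E[B])·var(B) − cov(A, B) ≥ 0. -/
/-!
Write `S_A = ∑_{i<M} A_i`, `S_B = ∑_{i<M} B_i`, `m = M·E[B]` and `T = S_B - m`. The exact identity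
`S_A / S_B = ∑_{k<4} S_A (m - S_B)^k / m^(k+1) + (S_A / S_B) T^4 / m^4`
turns `E[Z_M]` into the mixed moments `E[S_A T^k]` (`k ≤ 3`) plus a remainder of size at most
`(sup A / inf B) E[T^4] / m^4`. After centring the pairs, joint moments of partial sums of an
i.i.d. sequence satisfy a binomial recursion in `M`; since centred terms have mean zero, a moment of
total order `n` is a polynomial in `M` of degree at most `n / 2`. In particular `E[T^4] = O(M^2)`,
and collecting powers of `1/M` gives the expansion with an `O(M^-2)` error.

Nonnegativity of the coefficient is `cov(A,B)/var(B) < E[A]/E[B]` multiplied out; when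
`var(B) = 0` the division is junk, but then `B` is a.s. constant and the covariance vanishes.
-/

open MeasureTheory ProbabilityTheory Finset Filter Asymptotics

theorem div_eq_sum_add_div {K : Type*} [Field K] (a : K) {m s : K} (hm : m ≠ 0) (hs : s ≠ 0)
    (n : ℕ) :
    a / s = ∑ k ∈ range n, a * (m - s) ^ k / m ^ (k + 1) + a / s * (m - s) ^ n / m ^ n := by
  induction n with
  | zero => simp
  | succ n ih =>
    rw [sum_range_succ, add_assoc]
    convert ih using 2
    field_simp
    ring

theorem abs_sum_div_sum_le {ι : Type*} {s : Finset ι} (hs : s.Nonempty) {a c : ι → ℝ}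
    {Ca b : ℝ} (hb : 0 < b) (ha : ∀ i ∈ s, |a i| ≤ Ca) (hc : ∀ i ∈ s, b ≤ c i) :
    |(∑ i ∈ s, a i) / ∑ i ∈ s, c i| ≤ Ca / b := by
  have hn : (0 : ℝ) < #s := by exact_mod_cast hs.card_pos
  have hsa : |∑ i ∈ s, a i| ≤ #s * Ca :=
    (abs_sum_le_sum_abs _ _).trans ((sum_le_sum ha).trans_eq (by simp))
  have hsc : #s * b ≤ ∑ i ∈ s, c i := (le_of_eq (by simp)).trans (sum_le_sum hc)
  rw [abs_div, abs_of_pos ((by positivity : (0 : ℝ) < #s * b).trans_le hsc)]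
  calc |∑ i ∈ s, a i| / ∑ i ∈ s, c i ≤ #s * Ca / (#s * b) :=
        div_le_div₀ ((abs_nonneg _).trans hsa) hsa (by positivity) hsc
    _ = Ca / b := mul_div_mul_left _ _ hn.ne'

theorem mul_sub_nonneg_of_div_lt {r v c : ℝ} (hv : 0 ≤ v) (hc : v = 0 → c = 0)
    (h : c / v < r) : 0 ≤ r * v - c := by
  rcases hv.eq_or_lt with hv | hv
  · simp [← hv, hc hv.symm]
  · linarith [(div_lt_iff₀ hv).mp h]

theorem abs_quadratic_add_le {α β R K x : ℝ} (hx : 1 ≤ x) (hR : |R| ≤ K * x ^ 2) :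
    |α * x ^ 2 + β * x + R| ≤ (|α| + |β| + K) * x ^ 2 := by
  have hβ : |β * x| ≤ |β| * x ^ 2 := by
    rw [abs_mul, abs_of_nonneg (by linarith : (0 : ℝ) ≤ x)]
    exact mul_le_mul_of_nonneg_left (by nlinarith) (abs_nonneg β)
  calc |α * x ^ 2 + β * x + R| ≤ |α * x ^ 2| + |β * x| + |R| := abs_add_three _ _ _
    _ ≤ |α| * x ^ 2 + |β| * x ^ 2 + K * x ^ 2 := by
        rw [abs_mul, abs_of_nonneg (sq_nonneg x)]
        linarith
    _ = (|α| + |β| + K) * x ^ 2 := by ring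

theorem isBigO_inv_sq_of_eq_div {f R : ℕ → ℝ} {α β K c : ℝ} (hc : 0 < c)
    (hf : ∀ M, 0 < M → f M = (α * M ^ 2 + β * M + R M) / (c * M ^ 4))
    (hR : ∀ M, 0 < M → |R M| ≤ K * M ^ 2) :
    f =O[atTop] fun M : ℕ => ((M : ℝ) ^ 2)⁻¹ := by
  refine IsBigO.of_bound ((|α| + |β| + K) / c) ?_
  filter_upwards [eventually_gt_atTop 0] with M hM
  have hM1 : (1 : ℝ) ≤ M := by exact_mod_cast hM
  rw [Real.norm_eq_abs, Real.norm_eq_abs, hf M hM, abs_div,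
    abs_of_pos (by positivity : 0 < c * (M : ℝ) ^ 4),
    abs_of_pos (by positivity : (0 : ℝ) < ((M : ℝ) ^ 2)⁻¹)]
  calc _ ≤ (|α| + |β| + K) * M ^ 2 / (c * M ^ 4) := by
        gcongr
        exact abs_quadratic_add_le hM1 (hR M hM)
    _ = (|α| + |β| + K) / c * ((M : ℝ) ^ 2)⁻¹ := by
        field_simp

section Moments

variable {Ω : Type*} {mΩ : MeasurableSpace Ω} {μ : Measure Ω}

theorem integrable_comp_of_norm_le {E : Type*} [NormedAddCommGroup E] [ProperSpace E]
    [MeasurableSpace E] [OpensMeasurableSpace E] [IsFiniteMeasure μ] {Y : Ω → E}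
    (hY : AEMeasurable Y μ) {C : ℝ} (hC : ∀ ω, ‖Y ω‖ ≤ C) {φ : E → ℝ} (hφ : Continuous φ) :
    Integrable (fun ω => φ (Y ω)) μ := by
  obtain ⟨K, hK⟩ :=
    (isCompact_closedBall (0 : E) C).exists_bound_of_continuousOn hφ.continuousOn
  exact .of_bound (hφ.measurable.comp_aemeasurable hY).aestronglyMeasurable K
    (ae_of_all _ fun ω => hK _ (mem_closedBall_zero_iff.2 (hC ω)))

theorem norm_sum_range_apply_le {E : Type*} [SeminormedAddCommGroup E] {X : ℕ → Ω → E}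
    {C : ℝ} (hbdd : ∀ i ω, ‖X i ω‖ ≤ C) (M : ℕ) (ω : Ω) :
    ‖(∑ i ∈ range M, X i) ω‖ ≤ M * C := by
  simpa using (norm_sum_le (range M) fun i => X i ω).trans (sum_le_sum fun i _ => hbdd i ω)

noncomputable def mixedMoment (Y : Ω → ℝ × ℝ) (j k : ℕ) (μ : Measure Ω) : ℝ :=
  ∫ ω, (Y ω).1 ^ j * (Y ω).2 ^ k ∂μ

@[simp]
theorem mixedMoment_zero_zero [IsProbabilityMeasure μ] (Y : Ω → ℝ × ℝ) :
    mixedMoment Y 0 0 μ = 1 := by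
  simp [mixedMoment]

variable [IsProbabilityMeasure μ] {X : ℕ → Ω → ℝ × ℝ} {C : ℝ}
  (hindep : iIndepFun X μ) (hident : ∀ i, IdentDistrib (X i) (X 0) μ μ)
  (hbdd : ∀ i ω, ‖X i ω‖ ≤ C)
include hindep hident hbdd

theorem mixedMoment_sum_range_succ (M j k : ℕ) :
    mixedMoment (∑ i ∈ range (M + 1), X i) j k μ
      = ∑ a ∈ range (j + 1), ∑ c ∈ range (k + 1), (j.choose a * k.choose c : ℝ)
          * mixedMoment (∑ i ∈ range M, X i) a c μ * mixedMoment (X 0) (j - a) (k - c) μ := by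
  rw [mixedMoment, sum_range_succ X M]
  set S := ∑ i ∈ range M, X i
  have hmeas : ∀ i, AEMeasurable (X i) μ := fun i => (hident i).aemeasurable_fst
  have hSmeas : AEMeasurable S μ := Finset.aemeasurable_sum _ fun i _ => hmeas i
  have hind : IndepFun S (X M) μ := hindep.indepFun_finsetSum_of_notMem₀ hmeas (by simp)
  have hfactor : ∀ a c l n, ∫ ω, (S ω).1 ^ a * (S ω).2 ^ c * ((X M ω).1 ^ l * (X M ω).2 ^ n) ∂μ
      = mixedMoment S a c μ * mixedMoment (X 0) l n μ := fun a c l n => by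
    have hφ : Measurable fun p : ℝ × ℝ => p.1 ^ a * p.2 ^ c := by fun_prop
    have hψ : Measurable fun p : ℝ × ℝ => p.1 ^ l * p.2 ^ n := by fun_prop
    exact ((hind.comp hφ hψ).integral_fun_mul_eq_mul_integral
      (hφ.comp_aemeasurable hSmeas).aestronglyMeasurable
      (hψ.comp_aemeasurable (hmeas M)).aestronglyMeasurable).trans
      (congrArg _ ((hident M).comp hψ).integral_eq)
  have hint : ∀ a c l n, Integrable (fun ω =>
      (S ω).1 ^ a * (S ω).2 ^ c * ((X M ω).1 ^ l * (X M ω).2 ^ n)) μ := fun a c l n =>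
    integrable_comp_of_norm_le (Y := fun ω => (S ω, X M ω)) (hSmeas.prodMk (hmeas M))
      (C := max (M * C) C) (fun ω => norm_prod_le_iff.2
        ⟨(norm_sum_range_apply_le hbdd M ω).trans (le_max_left _ _),
          (hbdd M ω).trans (le_max_right _ _)⟩)
      (φ := fun p => p.1.1 ^ a * p.1.2 ^ c * (p.2.1 ^ l * p.2.2 ^ n)) (by fun_prop)
  have hexpand : ∀ ω, ((S + X M) ω).1 ^ j * ((S + X M) ω).2 ^ k
      = ∑ a ∈ range (j + 1), ∑ c ∈ range (k + 1), (j.choose a * k.choose c : ℝ)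
          * ((S ω).1 ^ a * (S ω).2 ^ c * ((X M ω).1 ^ (j - a) * (X M ω).2 ^ (k - c))) := by
    intro ω
    simp only [Pi.add_apply, Prod.fst_add, Prod.snd_add, add_pow, sum_mul_sum]
    exact sum_congr rfl fun a _ => sum_congr rfl fun c _ => by ring
  simp_rw [hexpand]
  rw [integral_finsetSum _ fun a _ =>
    integrable_finsetSum _ fun c _ => (hint _ _ _ _).const_mul _]
  refine sum_congr rfl fun a _ => ?_
  rw [integral_finsetSum _ fun c _ => (hint _ _ _ _).const_mul _]
  refine sum_congr rfl fun c _ => ?_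
  rw [integral_const_mul, hfactor]
  ring

theorem mixedMoment_sum_one_zero (h10 : mixedMoment (X 0) 1 0 μ = 0) (M : ℕ) :
    mixedMoment (∑ i ∈ range M, X i) 1 0 μ = 0 := by
  induction M with
  | zero => simp [mixedMoment]
  | succ M ih =>
    rw [mixedMoment_sum_range_succ hindep hident hbdd]
    simp [sum_range_succ, ih, h10]

theorem mixedMoment_sum_zero_one (h01 : mixedMoment (X 0) 0 1 μ = 0) (M : ℕ) :
    mixedMoment (∑ i ∈ range M, X i) 0 1 μ = 0 := by
  induction M with
  | zero => simp [mixedMoment]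
  | succ M ih =>
    rw [mixedMoment_sum_range_succ hindep hident hbdd]
    simp [sum_range_succ, ih, h01]

theorem mixedMoment_sum_zero_two (h01 : mixedMoment (X 0) 0 1 μ = 0) (M : ℕ) :
    mixedMoment (∑ i ∈ range M, X i) 0 2 μ = M * mixedMoment (X 0) 0 2 μ := by
  induction M with
  | zero => simp [mixedMoment]
  | succ M ih =>
    rw [mixedMoment_sum_range_succ hindep hident hbdd]
    simp [sum_range_succ, ih, h01]
    ring

theorem mixedMoment_sum_one_one (h10 : mixedMoment (X 0) 1 0 μ = 0)
    (h01 : mixedMoment (X 0) 0 1 μ = 0) (M : ℕ) :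
    mixedMoment (∑ i ∈ range M, X i) 1 1 μ = M * mixedMoment (X 0) 1 1 μ := by
  induction M with
  | zero => simp [mixedMoment]
  | succ M ih =>
    rw [mixedMoment_sum_range_succ hindep hident hbdd]
    simp [sum_range_succ, ih, h01, h10, mixedMoment_sum_zero_one hindep hident hbdd h01,
      mixedMoment_sum_one_zero hindep hident hbdd h10]
    ring

theorem mixedMoment_sum_zero_three (h01 : mixedMoment (X 0) 0 1 μ = 0) (M : ℕ) :
    mixedMoment (∑ i ∈ range M, X i) 0 3 μ = M * mixedMoment (X 0) 0 3 μ := by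
  induction M with
  | zero => simp [mixedMoment]
  | succ M ih =>
    rw [mixedMoment_sum_range_succ hindep hident hbdd]
    simp [sum_range_succ, ih, h01, mixedMoment_sum_zero_one hindep hident hbdd h01]
    ring

theorem mixedMoment_sum_one_two (h10 : mixedMoment (X 0) 1 0 μ = 0)
    (h01 : mixedMoment (X 0) 0 1 μ = 0) (M : ℕ) :
    mixedMoment (∑ i ∈ range M, X i) 1 2 μ = M * mixedMoment (X 0) 1 2 μ := by
  induction M with
  | zero => simp [mixedMoment]
  | succ M ih =>
    rw [mixedMoment_sum_range_succ hindep hident hbdd]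
    simp [sum_range_succ, ih, h01, h10, mixedMoment_sum_zero_one hindep hident hbdd h01,
      mixedMoment_sum_one_zero hindep hident hbdd h10]
    ring

theorem mixedMoment_sum_zero_four (h01 : mixedMoment (X 0) 0 1 μ = 0) (M : ℕ) :
    mixedMoment (∑ i ∈ range M, X i) 0 4 μ
      = M * mixedMoment (X 0) 0 4 μ + 3 * M * (M - 1) * mixedMoment (X 0) 0 2 μ ^ 2 := by
  induction M with
  | zero => simp [mixedMoment]
  | succ M ih =>
    rw [mixedMoment_sum_range_succ hindep hident hbdd]
    simp [sum_range_succ, ih, h01, (by decide : Nat.choose 4 2 = 6),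
      mixedMoment_sum_zero_one hindep hident hbdd h01,
      mixedMoment_sum_zero_two hindep hident hbdd h01]
    ring

theorem mixedMoment_sum_one_three (h10 : mixedMoment (X 0) 1 0 μ = 0)
    (h01 : mixedMoment (X 0) 0 1 μ = 0) (M : ℕ) :
    mixedMoment (∑ i ∈ range M, X i) 1 3 μ
      = M * mixedMoment (X 0) 1 3 μ
        + 3 * M * (M - 1) * mixedMoment (X 0) 1 1 μ * mixedMoment (X 0) 0 2 μ := by
  induction M with
  | zero => simp [mixedMoment]
  | succ M ih =>
    rw [mixedMoment_sum_range_succ hindep hident hbdd]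
    simp [sum_range_succ, ih, h01, h10, mixedMoment_sum_zero_one hindep hident hbdd h01,
      mixedMoment_sum_one_zero hindep hident hbdd h10,
      mixedMoment_sum_zero_two hindep hident hbdd h01,
      mixedMoment_sum_one_one hindep hident hbdd h10 h01]
    ring

theorem mixedMoment_sum_zero_four_le (h01 : mixedMoment (X 0) 0 1 μ = 0) (M : ℕ) :
    mixedMoment (∑ i ∈ range M, X i) 0 4 μ
      ≤ (mixedMoment (X 0) 0 4 μ + 3 * mixedMoment (X 0) 0 2 μ ^ 2) * M ^ 2 := by
  have h4 : 0 ≤ mixedMoment (X 0) 0 4 μ := integral_nonneg fun ω => by positivity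
  rw [mixedMoment_sum_zero_four hindep hident hbdd h01]
  rcases M.eq_zero_or_pos with rfl | hM
  · simp
  · have hM1 : (1 : ℝ) ≤ M := by exact_mod_cast hM
    nlinarith [mul_nonneg (sub_nonneg.2 hM1) h4, sq_nonneg (mixedMoment (X 0) 0 2 μ)]

end Moments

theorem covariance_eq_zero_of_variance_eq_zero {Ω : Type*} {mΩ : MeasurableSpace Ω}
    {μ : Measure Ω} [IsFiniteMeasure μ] {X Y : Ω → ℝ} (hY : MemLp Y 2 μ)
    (h : Var[Y; μ] = 0) : cov[X, Y; μ] = 0 := by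
  refine integral_eq_zero_of_ae ?_
  filter_upwards [ae_eq_integral_of_variance_eq_zero hY h] with ω hω
  simp [hω]

section Ratio

variable {Ω : Type*} {mΩ : MeasurableSpace Ω} {μ : Measure Ω} {A B : ℕ → Ω → ℝ}

/-- Centred at the means of index `0`; for identically distributed pairs these are the means of
every index. -/
noncomputable def centeredPair (A B : ℕ → Ω → ℝ) (μ : Measure Ω) (i : ℕ) (ω : Ω) : ℝ × ℝ :=
  (A i ω - ∫ ω, A 0 ω ∂μ, B i ω - ∫ ω, B 0 ω ∂μ)

theorem sum_centeredPair_apply (M : ℕ) (ω : Ω) :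
    (∑ i ∈ range M, centeredPair A B μ i) ω
      = (∑ i ∈ range M, A i ω - M * ∫ ω, A 0 ω ∂μ,
          ∑ i ∈ range M, B i ω - M * ∫ ω, B 0 ω ∂μ) := by
  ext <;> simp [centeredPair, Finset.sum_apply, Prod.fst_sum, Prod.snd_sum, sum_sub_distrib]

theorem sum_div_sum_eq {M : ℕ} {ω : Ω} (hm : (M : ℝ) * ∫ ω, B 0 ω ∂μ ≠ 0)
    (hs : ∑ i ∈ range M, B i ω ≠ 0) :
    (∑ i ∈ range M, A i ω) / (∑ i ∈ range M, B i ω)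
      = ∑ k ∈ range 4, (-1) ^ k * (((∑ i ∈ range M, centeredPair A B μ i) ω).1 ^ 1
            * ((∑ i ∈ range M, centeredPair A B μ i) ω).2 ^ k
          + M * (∫ ω, A 0 ω ∂μ) * (((∑ i ∈ range M, centeredPair A B μ i) ω).1 ^ 0
            * ((∑ i ∈ range M, centeredPair A B μ i) ω).2 ^ k)) / (M * ∫ ω, B 0 ω ∂μ) ^ (k + 1)
        + (∑ i ∈ range M, A i ω) / (∑ i ∈ range M, B i ω)
          * ((∑ i ∈ range M, centeredPair A B μ i) ω).2 ^ 4 / (M * ∫ ω, B 0 ω ∂μ) ^ 4 := by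
  conv_lhs => rw [div_eq_sum_add_div _ hm hs 4]
  rw [sum_centeredPair_apply]
  congr 1
  · refine sum_congr rfl fun k _ => ?_
    rw [show (M : ℝ) * (∫ ω, B 0 ω ∂μ) - ∑ i ∈ range M, B i ω
      = -1 * (∑ i ∈ range M, B i ω - M * ∫ ω, B 0 ω ∂μ) by ring, mul_pow]
    ring
  · ring

theorem iIndepFun_centeredPair (hindep : iIndepFun (fun i ω => (A i ω, B i ω)) μ) :
    iIndepFun (centeredPair A B μ) μ :=
  hindep.comp (fun _ p => (p.1 - ∫ ω, A 0 ω ∂μ, p.2 - ∫ ω, B 0 ω ∂μ)) fun _ => by fun_prop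

theorem identDistrib_centeredPair
    (hident : ∀ i, IdentDistrib (fun ω => (A i ω, B i ω)) (fun ω => (A 0 ω, B 0 ω)) μ μ)
    (i : ℕ) : IdentDistrib (centeredPair A B μ i) (centeredPair A B μ 0) μ μ :=
  (hident i).comp (u := fun p : ℝ × ℝ => (p.1 - ∫ ω, A 0 ω ∂μ, p.2 - ∫ ω, B 0 ω ∂μ))
    (by fun_prop)

theorem mixedMoment_centeredPair_one_one :
    mixedMoment (centeredPair A B μ 0) 1 1 μ = cov[A 0, B 0; μ] := by
  simp [mixedMoment, centeredPair, covariance]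

theorem mixedMoment_centeredPair_zero_two (hB : AEMeasurable (B 0) μ) :
    mixedMoment (centeredPair A B μ 0) 0 2 μ = Var[B 0; μ] := by
  simp [mixedMoment, centeredPair, variance_eq_integral hB]

variable [IsProbabilityMeasure μ]

theorem mixedMoment_centeredPair_one_zero (hA : Integrable (A 0) μ) :
    mixedMoment (centeredPair A B μ 0) 1 0 μ = 0 := by
  simp [mixedMoment, centeredPair, integral_sub hA (integrable_const _)]

theorem mixedMoment_centeredPair_zero_one (hB : Integrable (B 0) μ) :
    mixedMoment (centeredPair A B μ 0) 0 1 μ = 0 := by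
  simp [mixedMoment, centeredPair, integral_sub hB (integrable_const _)]

theorem norm_centeredPair_le {Ca Cb : ℝ} (hA : ∀ i ω, |A i ω| ≤ Ca)
    (hB : ∀ i ω, |B i ω| ≤ Cb) (i : ℕ) (ω : Ω) :
    ‖centeredPair A B μ i ω‖ ≤ 2 * max Ca Cb := by
  have hμA : |∫ ω, A 0 ω ∂μ| ≤ Ca := by
    simpa using norm_integral_le_of_norm_le_const (μ := μ)
      (ae_of_all _ fun ω => (Real.norm_eq_abs _).trans_le (hA 0 ω))
  have hμB : |∫ ω, B 0 ω ∂μ| ≤ Cb := by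
    simpa using norm_integral_le_of_norm_le_const (μ := μ)
      (ae_of_all _ fun ω => (Real.norm_eq_abs _).trans_le (hB 0 ω))
  refine norm_prod_le_iff.2 ⟨?_, ?_⟩ <;> simp only [centeredPair, Real.norm_eq_abs]
  · linarith [abs_sub (A i ω) (∫ ω, A 0 ω ∂μ), hA i ω, le_max_left Ca Cb]
  · linarith [abs_sub (B i ω) (∫ ω, B 0 ω ∂μ), hB i ω, le_max_right Ca Cb]

theorem integral_pos_of_forall_le {f : Ω → ℝ} (hf : Integrable f μ) {b : ℝ} (hb : 0 < b)
    (h : ∀ ω, b ≤ f ω) : 0 < ∫ ω, f ω ∂μ :=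
  hb.trans_le (by simpa using integral_mono (integrable_const b) hf h)

variable {Ca Cb b : ℝ}
  (hident : ∀ i, IdentDistrib (fun ω => (A i ω, B i ω)) (fun ω => (A 0 ω, B 0 ω)) μ μ)
  (hA : ∀ i ω, |A i ω| ≤ Ca) (hB : ∀ i ω, |B i ω| ≤ Cb)
include hident hA hB

theorem integrable_sum_centeredPair (M j k : ℕ) :
    Integrable (fun ω => ((∑ i ∈ range M, centeredPair A B μ i) ω).1 ^ j
      * ((∑ i ∈ range M, centeredPair A B μ i) ω).2 ^ k) μ :=
  integrable_comp_of_norm_le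
    (Finset.aemeasurable_sum _ fun i _ => (identDistrib_centeredPair hident i).aemeasurable_fst)
    (norm_sum_range_apply_le (norm_centeredPair_le hA hB) M)
    (φ := fun p : ℝ × ℝ => p.1 ^ j * p.2 ^ k) (by fun_prop)

theorem integral_sum_div_sum_eq (hb : 0 < b) (hBb : ∀ i ω, b ≤ B i ω) {M : ℕ} (hM : 0 < M) :
    ∫ ω, (∑ i ∈ range M, A i ω) / (∑ i ∈ range M, B i ω) ∂μ
      = ∑ k ∈ range 4, (-1) ^ k * (mixedMoment (∑ i ∈ range M, centeredPair A B μ i) 1 k μ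
            + M * (∫ ω, A 0 ω ∂μ) * mixedMoment (∑ i ∈ range M, centeredPair A B μ i) 0 k μ)
          / (M * ∫ ω, B 0 ω ∂μ) ^ (k + 1)
        + (∫ ω, (∑ i ∈ range M, A i ω) / (∑ i ∈ range M, B i ω)
            * ((∑ i ∈ range M, centeredPair A B μ i) ω).2 ^ 4 ∂μ) / (M * ∫ ω, B 0 ω ∂μ) ^ 4 := by
  have hint := integrable_sum_centeredPair hident hA hB (μ := μ) M
  have hB0 : Integrable (B 0) μ :=
    .of_bound (hident 0).aemeasurable_fst.snd.aestronglyMeasurable Cb (ae_of_all _ (hB 0))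
  have hm : (M : ℝ) * ∫ ω, B 0 ω ∂μ ≠ 0 :=
    mul_ne_zero (by positivity) (integral_pos_of_forall_le hB0 hb (hBb 0)).ne'
  have hne : (range M).Nonempty := nonempty_range_iff.2 hM.ne'
  have hratio : Integrable (fun ω => (∑ i ∈ range M, A i ω) / (∑ i ∈ range M, B i ω)
      * ((∑ i ∈ range M, centeredPair A B μ i) ω).2 ^ 4) μ := by
    have hmeas : AEMeasurable (fun ω => (∑ i ∈ range M, A i ω) / ∑ i ∈ range M, B i ω) μ :=
      (Finset.aemeasurable_fun_sum _ fun i _ => (hident i).aemeasurable_fst.fst).div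
        (Finset.aemeasurable_fun_sum _ fun i _ => (hident i).aemeasurable_fst.snd)
    simpa using (hint 0 4).bdd_mul hmeas.aestronglyMeasurable (ae_of_all _ fun ω =>
      abs_sum_div_sum_le hne hb (fun i _ => hA i ω) (fun i _ => hBb i ω))
  have hterm : ∀ k, Integrable (fun ω => (-1) ^ k
      * (((∑ i ∈ range M, centeredPair A B μ i) ω).1 ^ 1
          * ((∑ i ∈ range M, centeredPair A B μ i) ω).2 ^ k
        + M * (∫ ω, A 0 ω ∂μ) * (((∑ i ∈ range M, centeredPair A B μ i) ω).1 ^ 0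
          * ((∑ i ∈ range M, centeredPair A B μ i) ω).2 ^ k)) / (M * ∫ ω, B 0 ω ∂μ) ^ (k + 1)) μ :=
    fun k => (((hint 1 k).add ((hint 0 k).const_mul _)).const_mul _).div_const _
  rw [integral_congr_ae (ae_of_all μ fun ω =>
      sum_div_sum_eq hm (sum_pos (fun i _ => hb.trans_le (hBb i ω)) hne).ne'),
    integral_add (integrable_finsetSum _ fun k _ => hterm k) (hratio.div_const _),
    integral_finsetSum _ fun k _ => hterm k, integral_div]
  congr 1
  refine sum_congr rfl fun k _ => ?_
  rw [integral_div, integral_const_mul, integral_add (hint 1 k) ((hint 0 k).const_mul _),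
    integral_const_mul]
  rfl

theorem abs_integral_sum_div_sum_mul_le (hb : 0 < b) (hBb : ∀ i ω, b ≤ B i ω) {M : ℕ}
    (hM : 0 < M) :
    |∫ ω, (∑ i ∈ range M, A i ω) / (∑ i ∈ range M, B i ω)
        * ((∑ i ∈ range M, centeredPair A B μ i) ω).2 ^ 4 ∂μ|
      ≤ Ca / b * mixedMoment (∑ i ∈ range M, centeredPair A B μ i) 0 4 μ := by
  rw [← Real.norm_eq_abs, mixedMoment, ← integral_const_mul (Ca / b)]
  refine norm_integral_le_of_norm_le (μ := μ)
    ((integrable_sum_centeredPair hident hA hB M 0 4).const_mul _) (ae_of_all _ fun ω => ?_)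
  rw [Real.norm_eq_abs, abs_mul, abs_pow, (by decide : Even 4).pow_abs, pow_zero, one_mul]
  exact mul_le_mul_of_nonneg_right (abs_sum_div_sum_le (nonempty_range_iff.2 hM.ne') hb
    (fun i _ => hA i ω) (fun i _ => hBb i ω)) (by positivity)

theorem integral_sum_div_sum_sub_eq (hindep : iIndepFun (fun i ω => (A i ω, B i ω)) μ)
    (hb : 0 < b) (hBb : ∀ i ω, b ≤ B i ω) {M : ℕ} (hM : 0 < M) :
    ∫ ω, (∑ i ∈ range M, A i ω) / (∑ i ∈ range M, B i ω) ∂μ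
        - (∫ ω, A 0 ω ∂μ) / (∫ ω, B 0 ω ∂μ)
        - (M : ℝ)⁻¹ * ((∫ ω, B 0 ω ∂μ) ^ 2)⁻¹ * ((∫ ω, A 0 ω ∂μ) / (∫ ω, B 0 ω ∂μ)
          * mixedMoment (centeredPair A B μ 0) 0 2 μ - mixedMoment (centeredPair A B μ 0) 1 1 μ)
      = (((∫ ω, B 0 ω ∂μ) * mixedMoment (centeredPair A B μ 0) 1 2 μ
            - 3 * mixedMoment (centeredPair A B μ 0) 1 1 μ
              * mixedMoment (centeredPair A B μ 0) 0 2 μ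
            - (∫ ω, A 0 ω ∂μ) * mixedMoment (centeredPair A B μ 0) 0 3 μ) * M ^ 2
          + (3 * mixedMoment (centeredPair A B μ 0) 1 1 μ
              * mixedMoment (centeredPair A B μ 0) 0 2 μ
            - mixedMoment (centeredPair A B μ 0) 1 3 μ) * M
          + ∫ ω, (∑ i ∈ range M, A i ω) / (∑ i ∈ range M, B i ω)
            * ((∑ i ∈ range M, centeredPair A B μ i) ω).2 ^ 4 ∂μ)
        / ((∫ ω, B 0 ω ∂μ) ^ 4 * M ^ 4) := by
  have hA0 : Integrable (A 0) μ :=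
    .of_bound (hident 0).aemeasurable_fst.fst.aestronglyMeasurable Ca (ae_of_all _ (hA 0))
  have hB0 : Integrable (B 0) μ :=
    .of_bound (hident 0).aemeasurable_fst.snd.aestronglyMeasurable Cb (ae_of_all _ (hB 0))
  have hμB := integral_pos_of_forall_le hB0 hb (hBb 0)
  have hX := iIndepFun_centeredPair hindep
  have hXi := identDistrib_centeredPair hident
  have hXb := norm_centeredPair_le (μ := μ) hA hB
  have h10 := mixedMoment_centeredPair_one_zero (B := B) hA0
  have h01 := mixedMoment_centeredPair_zero_one (A := A) hB0
  have hM0 : (M : ℝ) ≠ 0 := by positivity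
  rw [integral_sum_div_sum_eq hident hA hB hb hBb hM]
  simp only [sum_range_succ, sum_range_zero, mixedMoment_zero_zero,
    mixedMoment_sum_one_zero hX hXi hXb h10, mixedMoment_sum_zero_one hX hXi hXb h01,
    mixedMoment_sum_one_one hX hXi hXb h10 h01, mixedMoment_sum_zero_two hX hXi hXb h01,
    mixedMoment_sum_one_two hX hXi hXb h10 h01, mixedMoment_sum_zero_three hX hXi hXb h01,
    mixedMoment_sum_one_three hX hXi hXb h10 h01]
  field_simp
  ring

theorem isBigO_integral_sum_div_sum (hindep : iIndepFun (fun i ω => (A i ω, B i ω)) μ)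
    (hb : 0 < b) (hBb : ∀ i ω, b ≤ B i ω) :
    (fun M : ℕ => ∫ ω, (∑ i ∈ range M, A i ω) / (∑ i ∈ range M, B i ω) ∂μ
        - (∫ ω, A 0 ω ∂μ) / (∫ ω, B 0 ω ∂μ)
        - (M : ℝ)⁻¹ * ((∫ ω, B 0 ω ∂μ) ^ 2)⁻¹
          * ((∫ ω, A 0 ω ∂μ) / (∫ ω, B 0 ω ∂μ) * Var[B 0; μ] - cov[A 0, B 0; μ]))
      =O[atTop] fun M : ℕ => ((M : ℝ) ^ 2)⁻¹ := by
  have hB0 : Integrable (B 0) μ :=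
    .of_bound (hident 0).aemeasurable_fst.snd.aestronglyMeasurable Cb (ae_of_all _ (hB 0))
  obtain ⟨ω⟩ := nonempty_of_isProbabilityMeasure μ
  have hCab : 0 ≤ Ca / b := div_nonneg ((abs_nonneg _).trans (hA 0 ω)) hb.le
  rw [← mixedMoment_centeredPair_zero_two (A := A) hB0.aemeasurable,
    ← mixedMoment_centeredPair_one_one]
  refine isBigO_inv_sq_of_eq_div (K := Ca / b * (mixedMoment (centeredPair A B μ 0) 0 4 μ
      + 3 * mixedMoment (centeredPair A B μ 0) 0 2 μ ^ 2))
    (pow_pos (integral_pos_of_forall_le hB0 hb (hBb 0)) 4)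
    (fun M hM => integral_sum_div_sum_sub_eq hident hA hB hindep hb hBb hM) fun M hM => ?_
  refine (abs_integral_sum_div_sum_mul_le hident hA hB hb hBb hM).trans ?_
  rw [mul_assoc]
  exact mul_le_mul_of_nonneg_left (mixedMoment_sum_zero_four_le (iIndepFun_centeredPair hindep)
    (identDistrib_centeredPair hident) (norm_centeredPair_le hA hB)
    (mixedMoment_centeredPair_zero_one hB0) M) hCab

end Ratio

theorem ratio_of_sums_expansion_general {Ω : Type*} [MeasureSpace Ω]
    [IsProbabilityMeasure (volume : Measure Ω)]
    (A B : ℕ → Ω → ℝ)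
    (hindep : ProbabilityTheory.iIndepFun
      (fun i ω => (A i ω, B i ω)) volume)
    (hident : ∀ i, ProbabilityTheory.IdentDistrib
      (fun ω => (A i ω, B i ω)) (fun ω => (A 0 ω, B 0 ω)) volume volume)
    (Ca : ℝ) (hAbd : ∀ i ω, 0 < A i ω ∧ A i ω ≤ Ca)
    (b Cb : ℝ) (hb : 0 < b) (hBbd : ∀ i ω, b ≤ B i ω ∧ B i ω ≤ Cb)
    (hstrict : ((∫ ω, A 0 ω * B 0 ω) - (∫ ω, A 0 ω) * ∫ ω, B 0 ω) /
        ((∫ ω, (B 0 ω) ^ 2) - (∫ ω, B 0 ω) ^ 2)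
      < (∫ ω, A 0 ω) / ∫ ω, B 0 ω) :
    0 ≤ ((∫ ω, A 0 ω) / ∫ ω, B 0 ω) * ((∫ ω, (B 0 ω) ^ 2) - (∫ ω, B 0 ω) ^ 2)
        - ((∫ ω, A 0 ω * B 0 ω) - (∫ ω, A 0 ω) * ∫ ω, B 0 ω) ∧
    (fun M : ℕ =>
        (∫ ω, (∑ i ∈ Finset.range M, A i ω) / (∑ i ∈ Finset.range M, B i ω))
        - ((∫ ω, A 0 ω) / ∫ ω, B 0 ω)
        - (M : ℝ)⁻¹ * ((∫ ω, B 0 ω) ^ 2)⁻¹ *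
            (((∫ ω, A 0 ω) / ∫ ω, B 0 ω) * ((∫ ω, (B 0 ω) ^ 2) - (∫ ω, B 0 ω) ^ 2)
              - ((∫ ω, A 0 ω * B 0 ω) - (∫ ω, A 0 ω) * ∫ ω, B 0 ω)))
      =O[atTop] fun M : ℕ => ((M : ℝ) ^ 2)⁻¹ := by
  have hA : ∀ i ω, |A i ω| ≤ Ca := fun i ω =>
    abs_le.2 ⟨by linarith [(hAbd i ω).1, (hAbd i ω).2], (hAbd i ω).2⟩
  have hB : ∀ i ω, |B i ω| ≤ Cb := fun i ω =>
    abs_le.2 ⟨by linarith [(hBbd i ω).1, (hBbd i ω).2], (hBbd i ω).2⟩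
  have hA2 : MemLp (A 0) 2 :=
    .of_bound (hident 0).aemeasurable_fst.fst.aestronglyMeasurable Ca (ae_of_all _ (hA 0))
  have hB2 : MemLp (B 0) 2 :=
    .of_bound (hident 0).aemeasurable_fst.snd.aestronglyMeasurable Cb (ae_of_all _ (hB 0))
  have hcov : (∫ ω, A 0 ω * B 0 ω) - (∫ ω, A 0 ω) * ∫ ω, B 0 ω = cov[A 0, B 0] :=
    (covariance_eq_sub hA2 hB2).symm
  have hvar : (∫ ω, B 0 ω ^ 2) - (∫ ω, B 0 ω) ^ 2 = Var[B 0] := (variance_eq_sub hB2).symm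
  rw [hcov, hvar] at hstrict ⊢
  exact ⟨mul_sub_nonneg_of_div_lt (variance_nonneg _ _)
      (covariance_eq_zero_of_variance_eq_zero hB2) hstrict,
    isBigO_integral_sum_div_sum hident hA hB hindep hb fun i ω => (hBbd i ω).1⟩

/-- For an i.i.d. sequence of pairs of positive bounded random variables with `B`
bounded away from zero and `cov(A,B)/var(B) < E[A]/E[B]`, the expansion
`E[Z_M] = E[A]/E[B] + M⁻¹ E[B]⁻² ((E[A]/E[B])·var(B) − cov(A,B)) + O(M⁻²)` holds for
`Z_M = (∑_{i<M} A_i)/(∑_{i<M} B_i)`, and the first-order coefficient is nonnegative. -/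
theorem ratio_of_sums_expansion {Ω : Type*} [MeasureSpace Ω]
    [IsProbabilityMeasure (volume : Measure Ω)]
    (A B : ℕ → Ω → ℝ)
    (hmeas : ∀ i, Measurable (fun ω => (A i ω, B i ω)))
    (hindep : ProbabilityTheory.iIndepFun
      (fun i ω => (A i ω, B i ω)) volume)
    (hident : ∀ i, ProbabilityTheory.IdentDistrib
      (fun ω => (A i ω, B i ω)) (fun ω => (A 0 ω, B 0 ω)) volume volume)
    (Ca : ℝ) (hAbd : ∀ i ω, 0 < A i ω ∧ A i ω ≤ Ca)
    (b Cb : ℝ) (hb : 0 < b) (hBbd : ∀ i ω, b ≤ B i ω ∧ B i ω ≤ Cb)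
    (hstrict : ((∫ ω, A 0 ω * B 0 ω) - (∫ ω, A 0 ω) * ∫ ω, B 0 ω) /
        ((∫ ω, (B 0 ω) ^ 2) - (∫ ω, B 0 ω) ^ 2)
      < (∫ ω, A 0 ω) / ∫ ω, B 0 ω) :
    0 ≤ ((∫ ω, A 0 ω) / ∫ ω, B 0 ω) * ((∫ ω, (B 0 ω) ^ 2) - (∫ ω, B 0 ω) ^ 2)
        - ((∫ ω, A 0 ω * B 0 ω) - (∫ ω, A 0 ω) * ∫ ω, B 0 ω) ∧
    (fun M : ℕ =>
        (∫ ω, (∑ i ∈ Finset.range M, A i ω) / (∑ i ∈ Finset.range M, B i ω))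
        - ((∫ ω, A 0 ω) / ∫ ω, B 0 ω)
        - (M : ℝ)⁻¹ * ((∫ ω, B 0 ω) ^ 2)⁻¹ *
            (((∫ ω, A 0 ω) / ∫ ω, B 0 ω) * ((∫ ω, (B 0 ω) ^ 2) - (∫ ω, B 0 ω) ^ 2)
              - ((∫ ω, A 0 ω * B 0 ω) - (∫ ω, A 0 ω) * ∫ ω, B 0 ω)))
      =O[atTop] fun M : ℕ => ((M : ℝ) ^ 2)⁻¹ :=
  ratio_of_sums_expansion_general A B hindep hident Ca hAbd b Cb hb hBbd hstrict
end
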